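/- arXiv:2305.07364 — 3 statements merged into one kernel-verified Lean document; each statement's English description precedes it below -/
import Mathlib

section
/- Companion lemma: Let g be a gate of a monotone multilinear Boolean circuit that contains no Boolean-constant input gates, and let t be a term in T(g). Then there exists a term t' in T(g) without variable repetitions (no variable occurs twice or more in t') such that t' ≤ t, i.e., for every variable x, the number of occurrences of x in t' does not exceed the number of occurrences of x in t. -/
open BigOperators

namespace MC

/-- A gate label: an input gate labeled by a variable or a Boolean constant,
or an OR/AND gate with the indices of its two direct predecessors. -/
inductive GateLabel (V : Type) where
  | var (v : V)
  | const (b : Bool)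
  | or (a b : ℕ)
  | and (a b : ℕ)

def GateLabel.isOp {V : Type} : GateLabel V → Bool
  | .or _ _ => true
  | .and _ _ => true
  | _ => false

def GateLabel.isAnd {V : Type} : GateLabel V → Bool
  | .and _ _ => true
  | _ => false

def GateLabel.isOr {V : Type} : GateLabel V → Bool
  | .or _ _ => true
  | _ => false

/-- A monotone Boolean circuit: a finite DAG whose gates are numbered
`0, …, n-1` in topological order (direct predecessors of a gate have smaller
indices, which enforces acyclicity). Gates of indegree 0 are labeled by
variables or Boolean constants, the remaining gates are OR/AND gates of
indegree 2. -/
structure Circuit (V : Type) where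
  n : ℕ
  label : Fin n → GateLabel V
  wf : ∀ (i : Fin n) (a b : ℕ),
    (label i = .or a b ∨ label i = .and a b) → a < i.1 ∧ b < i.1

namespace Circuit

variable {V : Type}

/-- The set `T(g)` of terms associated with gate `g`: for an input gate the
singleton of its label, for an OR gate the union of the term sets of its two
direct predecessors, and for an AND gate the set of concatenations `t₁ t₂` of
terms of its two direct predecessors. A term is a word over variables and
Boolean constants. -/
inductive MemTerms (C : Circuit V) : Fin C.n → List (V ⊕ Bool) → Prop
  | var {i : Fin C.n} {v : V} : C.label i = .var v → MemTerms C i [Sum.inl v]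
  | const {i : Fin C.n} {b : Bool} : C.label i = .const b → MemTerms C i [Sum.inr b]
  | or_left {i : Fin C.n} {a b : ℕ} {t : List (V ⊕ Bool)}
      (h : C.label i = .or a b) (ha : a < C.n) :
      MemTerms C ⟨a, ha⟩ t → MemTerms C i t
  | or_right {i : Fin C.n} {a b : ℕ} {t : List (V ⊕ Bool)}
      (h : C.label i = .or a b) (hb : b < C.n) :
      MemTerms C ⟨b, hb⟩ t → MemTerms C i t
  | and {i : Fin C.n} {a b : ℕ} {t₁ t₂ : List (V ⊕ Bool)}
      (h : C.label i = .and a b) (ha : a < C.n) (hb : b < C.n) :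
      MemTerms C ⟨a, ha⟩ t₁ → MemTerms C ⟨b, hb⟩ t₂ → MemTerms C i (t₁ ++ t₂)

end Circuit

/-- Evaluation of a single letter (variable or constant) of a term. -/
def litEval {V : Type} (σ : V → Bool) : V ⊕ Bool → Bool
  | Sum.inl v => σ v
  | Sum.inr b => b

/-- A term evaluates to true iff the conjunction of its letters is true. -/
def termEval {V : Type} (σ : V → Bool) (t : List (V ⊕ Bool)) : Bool :=
  t.all (litEval σ)

/-- The (monotone Boolean) function computed at gate `g`: the disjunction,
over all terms `t ∈ T(g)`, of the conjunction represented by `t`. -/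
def Circuit.gateFun {V : Type} (C : Circuit V) (g : Fin C.n) (σ : V → Bool) : Prop :=
  ∃ t : List (V ⊕ Bool), C.MemTerms g t ∧ termEval σ t = true

/-- A Boolean function depends on the variable `v`. -/
def Depends {V : Type} [DecidableEq V] (f : (V → Bool) → Prop) (v : V) : Prop :=
  ∃ σ : V → Bool,
    ¬(f (Function.update σ v false) ↔ f (Function.update σ v true))

/-- A monotone Boolean circuit is multilinear if for every AND gate the
functions computed at its two direct predecessors share no variable. -/
def Circuit.Multilinear {V : Type} [DecidableEq V] (C : Circuit V) : Prop :=
  ∀ (i : Fin C.n) (a b : ℕ), C.label i = .and a b →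
    ∀ (ha : a < C.n) (hb : b < C.n) (v : V),
      ¬(Depends (C.gateFun ⟨a, ha⟩) v ∧ Depends (C.gateFun ⟨b, hb⟩) v)

/-- `S` (a conjunction of variables) is an implicant of `f`: whenever all the
variables of `S` are true, `f` is true. -/
def Implicant {V : Type} (f : (V → Bool) → Prop) (S : Finset V) : Prop :=
  ∀ σ : V → Bool, (∀ v ∈ S, σ v = true) → f σ

/-- A prime implicant: an implicant minimal with respect to included variables. -/
def PrimeImplicant {V : Type} (f : (V → Bool) → Prop) (S : Finset V) : Prop :=
  Implicant f S ∧ ∀ S' ⊂ S, ¬ Implicant f S'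

/-- The set of variables occurring in a term. -/
def termVars {V : Type} (t : List (V ⊕ Bool)) : Set V := {v : V | Sum.inl v ∈ t}

/-- A term `t` represents the monom with variable set `S` if the set of
variables occurring in `t` equals `S`. -/
def Represents {V : Type} (t : List (V ⊕ Bool)) (S : Finset V) : Prop :=
  termVars t = ↑S

/-- The circuit computes the form `F` (a family of monotone Boolean
functions), the function `F i` being computed at the output gate `out i`. -/
def Circuit.Computes {V ι : Type} (C : Circuit V) (out : ι → Fin C.n)
    (F : ι → (V → Bool) → Prop) : Prop :=
  ∀ (i : ι) (σ : V → Bool), C.gateFun (out i) σ ↔ F i σ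

/-- The circuit (with output gates `out`, computing the form `F`) is
`q`-multilinear: for each prime implicant `S` of each `F i` there is a term
`t ∈ T(out i)` representing `S` in which no variable occurs more than `q`
times. -/
def Circuit.QMultilinear {V ι : Type} [DecidableEq V] (C : Circuit V)
    (out : ι → Fin C.n) (F : ι → (V → Bool) → Prop) (q : ℕ) : Prop :=
  ∀ (i : ι) (S : Finset V), PrimeImplicant (F i) S →
    ∃ t : List (V ⊕ Bool), C.MemTerms (out i) t ∧ Represents t S ∧
      ∀ v : V, t.count (Sum.inl v) ≤ q

/-- The circuit is strictly `q`-multilinear: no term of any gate contains more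
than `q` occurrences of a single variable. -/
def Circuit.StrictlyQMultilinear {V : Type} [DecidableEq V] (C : Circuit V) (q : ℕ) : Prop :=
  ∀ (g : Fin C.n) (t : List (V ⊕ Bool)), C.MemTerms g t →
    ∀ v : V, t.count (Sum.inl v) ≤ q

/-- The size of a circuit: the number of its non-input gates. -/
def Circuit.size {V : Type} (C : Circuit V) : ℕ :=
  (Finset.univ.filter fun i : Fin C.n => (C.label i).isOp = true).card

/-- The number of AND gates of a circuit. -/
def Circuit.andGateCount {V : Type} (C : Circuit V) : ℕ :=
  (Finset.univ.filter fun i : Fin C.n => (C.label i).isAnd = true).card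

/-- The number of OR gates of a circuit. -/
def Circuit.orGateCount {V : Type} (C : Circuit V) : ℕ :=
  (Finset.univ.filter fun i : Fin C.n => (C.label i).isOr = true).card

/-- The circuit has no Boolean-constant input gates. -/
def Circuit.NoConstants {V : Type} (C : Circuit V) : Prop :=
  ∀ (i : Fin C.n) (b : Bool), C.label i ≠ .const b

/-- `AndDepth C g d`: there is a path from an input gate to the gate `g`
containing exactly `d` AND gates. -/
inductive Circuit.AndDepth {V : Type} (C : Circuit V) : Fin C.n → ℕ → Prop
  | input {i : Fin C.n} : (C.label i).isOp = false → AndDepth C i 0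
  | or_step {i : Fin C.n} {a b p d : ℕ}
      (h : C.label i = .or a b) (hp : p = a ∨ p = b) (hpn : p < C.n) :
      AndDepth C ⟨p, hpn⟩ d → AndDepth C i d
  | and_step {i : Fin C.n} {a b p d : ℕ}
      (h : C.label i = .and a b) (hp : p = a ∨ p = b) (hpn : p < C.n) :
      AndDepth C ⟨p, hpn⟩ d → AndDepth C i (d + 1)

/-- `AltDepth C g l d`: there is a path from an input gate to the gate `g`
whose non-input gates form exactly `d` blocks of consecutive OR gates and
consecutive AND gates, the last block consisting of OR gates (if
`l = some false`) or of AND gates (if `l = some true`); `l = none` when the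
path consists of a single input gate. -/
inductive Circuit.AltDepth {V : Type} (C : Circuit V) : Fin C.n → Option Bool → ℕ → Prop
  | input {i : Fin C.n} : (C.label i).isOp = false → AltDepth C i none 0
  | or_step {i : Fin C.n} {a b p : ℕ} {l : Option Bool} {d : ℕ}
      (h : C.label i = .or a b) (hp : p = a ∨ p = b) (hpn : p < C.n) :
      AltDepth C ⟨p, hpn⟩ l d →
      AltDepth C i (some false) (if l = some false then d else d + 1)
  | and_step {i : Fin C.n} {a b p : ℕ} {l : Option Bool} {d : ℕ}
      (h : C.label i = .and a b) (hp : p = a ∨ p = b) (hpn : p < C.n) :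
      AltDepth C ⟨p, hpn⟩ l d →
      AltDepth C i (some true) (if l = some true then d else d + 1)

/-- The alternation depth of the circuit (with output gates `out`) is at most `d`. -/
def Circuit.AltDepthLE {V ι : Type} (C : Circuit V) (out : ι → Fin C.n) (d : ℕ) : Prop :=
  ∀ (i : ι) (l : Option Bool) (c : ℕ), C.AltDepth (out i) l c → c ≤ d

/-- A `Π_d` circuit: alternation depth at most `d` and all output gates are AND gates. -/
def Circuit.IsPi {V ι : Type} (C : Circuit V) (out : ι → Fin C.n) (d : ℕ) : Prop :=
  (∀ i : ι, (C.label (out i)).isAnd = true) ∧ C.AltDepthLE out d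

/-- A `Σ_d` circuit: alternation depth at most `d` and all output gates are OR gates. -/
def Circuit.IsSigma {V ι : Type} (C : Circuit V) (out : ι → Fin C.n) (d : ℕ) : Prop :=
  (∀ i : ι, (C.label (out i)).isOr = true) ∧ C.AltDepthLE out d

/-- A monotone Boolean function. -/
def MonotoneFun {V : Type} (f : (V → Bool) → Prop) : Prop :=
  ∀ σ σ' : V → Bool, (∀ v : V, σ v = true → σ' v = true) → f σ → f σ'

/-- A semi-disjoint bilinear form on the variables `x_0,…,x_{n-1}` (the left
summands) and `y_0,…,y_{n-1}` (the right summands): a family of monotone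
Boolean functions such that every prime implicant consists of exactly one
`x`-variable and one `y`-variable, for each function every variable occurs in
at most one of its prime implicants, and the sets of prime implicants of
different functions of the family are pairwise disjoint. -/
def SemiDisjointBilinear {n : ℕ} {ι : Type}
    (F : ι → ((Fin n ⊕ Fin n) → Bool) → Prop) : Prop :=
  (∀ i : ι, MonotoneFun (F i)) ∧
  (∀ (i : ι) (S : Finset (Fin n ⊕ Fin n)), PrimeImplicant (F i) S →
    ∃ a b : Fin n, S = {Sum.inl a, Sum.inr b}) ∧
  (∀ (i : ι) (S S' : Finset (Fin n ⊕ Fin n)) (z : Fin n ⊕ Fin n),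
    PrimeImplicant (F i) S → PrimeImplicant (F i) S' → z ∈ S → z ∈ S' → S = S') ∧
  (∀ (i j : ι) (S : Finset (Fin n ⊕ Fin n)), i ≠ j →
    PrimeImplicant (F i) S → ¬ PrimeImplicant (F j) S)

/-- The total number of prime implicants of the form `F`. -/
noncomputable def totalPrimeImplicants {V ι : Type} (F : ι → (V → Bool) → Prop) : ℕ :=
  Nat.card {pr : ι × Finset V // PrimeImplicant (F pr.1) pr.2}

/-- A cell of the `k`-dimensional grid `[n]^k`. -/
abbrev Cell (k n : ℕ) := Fin k → Fin n

/-- The function `Isol_{k,n}`: for a `k`-dimensional `n × ⋯ × n` Boolean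
matrix `σ`, it is true iff every line (a set of `n` entries obtained by fixing
`k-1` indices and letting the remaining one, in direction `d`, range over `[n]`)
contains at least one `1`. -/
def IsolFun (k n : ℕ) (σ : Cell k n → Bool) : Prop :=
  ∀ (d : Fin k) (c : Cell k n), ∃ x : Cell k n,
    (∀ j : Fin k, j ≠ d → x j = c j) ∧ σ x = true

/-- Every line of the grid contains exactly one cell of `S`. -/
def ExactlyOnePerLine (k n : ℕ) (S : Finset (Cell k n)) : Prop :=
  ∀ (d : Fin k) (c : Cell k n),
    ∃! x : Cell k n, x ∈ S ∧ ∀ j : Fin k, j ≠ d → x j = c j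

/-- `|SPI(Isol_{k,n})|`: the number of shortest prime implicants of
`Isol_{k,n}`, i.e. the number of sets `S` of `n^{k-1}` cells of `[n]^k` such
that every line of the grid contains exactly one cell of `S`. -/
noncomputable def spiCount (k n : ℕ) : ℕ :=
  Set.ncard {S : Finset (Cell k n) |
    S.card = n ^ (k - 1) ∧ ExactlyOnePerLine k n S}

/-- The circuit obtained from `C` by replacing the gate `g` with the Boolean
constant `1`. -/
def Circuit.replaceByTrue {V : Type} (C : Circuit V) (g : Fin C.n) : Circuit V where
  n := C.n
  label := Function.update C.label g (GateLabel.const true)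
  wf := by
    intro i a b hab
    rcases eq_or_ne i g with rfl | hig
    · rw [Function.update_self] at hab
      rcases hab with h | h <;> cases h
    · rw [Function.update_of_ne hig] at hab
      exact C.wf i a b hab

end MC

/-! A term of a gate can be thinned to one whose variable set is minimal among the terms of that
gate. In a circuit without constants, the function computed at a gate depends on every variable of
such a minimal term, so at an AND gate multilinearity makes minimal terms of the two predecessors
variable-disjoint. By induction over the gates these minimal terms may be taken repetition-free,
and then so is their concatenation. -/

-- Core derives `BEq` for `Sum` without a `LawfulBEq` instance, which the `List.count` API needs.
instance Sum.instLawfulBEq {α β : Type*} [BEq α] [LawfulBEq α] [BEq β] [LawfulBEq β] :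
    LawfulBEq (α ⊕ β) where
  rfl {x} := by
    cases x with
    | inl a => exact (BEq.rfl : a == a)
    | inr b => exact (BEq.rfl : b == b)
  eq_of_beq {x y} h := by
    cases x <;> cases y <;> first | cases h | exact congrArg _ (eq_of_beq h)

namespace MC

section Terms

variable {V : Type} [DecidableEq V]

def termVarFinset (t : List (V ⊕ Bool)) : Finset V :=
  (t.filterMap Sum.getLeft?).toFinset

@[simp]
lemma mem_termVarFinset {t : List (V ⊕ Bool)} {v : V} :
    v ∈ termVarFinset t ↔ Sum.inl v ∈ t := by
  simp [termVarFinset]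

lemma termVarFinset_append (t₁ t₂ : List (V ⊕ Bool)) :
    termVarFinset (t₁ ++ t₂) = termVarFinset t₁ ∪ termVarFinset t₂ := by
  ext v
  simp

lemma termEval_eq_true_iff {σ : V → Bool} {t : List (V ⊕ Bool)}
    (ht : ∀ x ∈ t, x.isLeft) :
    termEval σ t = true ↔ ∀ v ∈ termVarFinset t, σ v = true := by
  simp only [termEval, List.all_eq_true, mem_termVarFinset]
  refine ⟨fun h v hv => h _ hv, fun h x hx => ?_⟩
  obtain ⟨v, rfl⟩ := Sum.isLeft_iff.1 (ht x hx)
  exact h v hx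

def RepetitionFree (t : List (V ⊕ Bool)) : Prop :=
  ∀ v : V, t.count (Sum.inl v) ≤ 1

lemma RepetitionFree.append {t₁ t₂ : List (V ⊕ Bool)} (h₁ : RepetitionFree t₁)
    (h₂ : RepetitionFree t₂) (hdisj : Disjoint (termVarFinset t₁) (termVarFinset t₂)) :
    RepetitionFree (t₁ ++ t₂) := by
  intro v
  rw [List.count_append]
  by_cases hv : Sum.inl v ∈ t₁
  · have hv₂ : Sum.inl v ∉ t₂ := by
      simpa using Finset.disjoint_left.1 hdisj (mem_termVarFinset.2 hv)
    rw [List.count_eq_zero.2 hv₂]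
    exact h₁ v
  · rw [List.count_eq_zero.2 hv, Nat.zero_add]
    exact h₂ v

lemma RepetitionFree.count_le_count {t' t : List (V ⊕ Bool)} (h : RepetitionFree t')
    (hsub : termVarFinset t' ⊆ termVarFinset t) (v : V) :
    t'.count (Sum.inl v) ≤ t.count (Sum.inl v) := by
  by_cases hv : Sum.inl v ∈ t'
  · exact (h v).trans (List.count_pos_iff.2 (mem_termVarFinset.1 (hsub (mem_termVarFinset.2 hv))))
  · rw [List.count_eq_zero.2 hv]
    exact Nat.zero_le _

end Terms

namespace Circuit

variable {V : Type} {C : Circuit V}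

lemma MemTerms.isLeft_of_mem (hnc : C.NoConstants) {g : Fin C.n} {t : List (V ⊕ Bool)}
    (ht : C.MemTerms g t) : ∀ x ∈ t, x.isLeft := by
  induction ht with
  | var => simp
  | const h => exact absurd h (hnc _ _)
  | or_left _ _ _ ih => exact ih
  | or_right _ _ _ ih => exact ih
  | and _ _ _ _ _ ih₁ ih₂ =>
    intro x hx
    rcases List.mem_append.1 hx with hx | hx
    exacts [ih₁ x hx, ih₂ x hx]

variable [DecidableEq V]

def MinimalTerm (C : Circuit V) (g : Fin C.n) (s : List (V ⊕ Bool)) : Prop :=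
  C.MemTerms g s ∧ ∀ s', C.MemTerms g s' → ¬ termVarFinset s' ⊂ termVarFinset s

lemma exists_minimalTerm_subset {g : Fin C.n} {t : List (V ⊕ Bool)} (ht : C.MemTerms g t) :
    ∃ s, C.MinimalTerm g s ∧ termVarFinset s ⊆ termVarFinset t := by
  obtain ⟨_, ⟨s, hs, rfl, hst⟩, hmin⟩ := wellFounded_lt.has_min
    {S : Finset V | ∃ s, C.MemTerms g s ∧ termVarFinset s = S ∧ S ⊆ termVarFinset t}
    ⟨_, t, ht, rfl, subset_rfl⟩
  exact ⟨s, ⟨hs, fun s' hs' hlt => hmin _ ⟨s', hs', rfl, hlt.subset.trans hst⟩ hlt⟩, hst⟩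

lemma MinimalTerm.of_subset {g : Fin C.n} {s t : List (V ⊕ Bool)} (hs : C.MinimalTerm g s)
    (ht : C.MemTerms g t) (hts : termVarFinset t ⊆ termVarFinset s) : C.MinimalTerm g t := by
  have heq : termVarFinset t = termVarFinset s :=
    hts.eq_of_not_ssubset (hs.2 t ht)
  exact ⟨ht, heq ▸ hs.2⟩

/-- Witness: the assignment that is true exactly on the variables of `s`. Setting `v` to false
kills `s`, and a surviving term would have a strictly smaller variable set. -/
lemma MinimalTerm.depends (hnc : C.NoConstants) {g : Fin C.n} {s : List (V ⊕ Bool)}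
    (hs : C.MinimalTerm g s) {v : V} (hv : v ∈ termVarFinset s) :
    Depends (C.gateFun g) v := by
  set σ : V → Bool := fun w => decide (w ∈ termVarFinset s)
  refine ⟨σ, fun hiff => ?_⟩
  have hσ : Function.update σ v true = σ :=
    Function.update_eq_self_iff.2 (by simpa [σ, eq_comm] using hv)
  have hsσ : termEval σ s = true :=
    (termEval_eq_true_iff (hs.1.isLeft_of_mem hnc)).2 fun w hw => by simpa [σ] using hw
  obtain ⟨s', hs', heval⟩ := hiff.2 (by rw [hσ]; exact ⟨s, hs.1, hsσ⟩)
  have hsub : termVarFinset s' ⊆ (termVarFinset s).erase v := by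
    intro w hw
    have hσw := (termEval_eq_true_iff (hs'.isLeft_of_mem hnc)).1 heval w hw
    rcases eq_or_ne w v with rfl | hwv
    · simp at hσw
    · simpa [Function.update_of_ne hwv, σ, hwv] using hσw
  exact hs.2 s' hs' (hsub.trans_ssubset (Finset.erase_ssubset hv))

lemma exists_repetitionFree_subset (hml : C.Multilinear) (hnc : C.NoConstants)
    (g : Fin C.n) {t : List (V ⊕ Bool)} (ht : C.MemTerms g t) :
    ∃ t', C.MemTerms g t' ∧ RepetitionFree t' ∧ termVarFinset t' ⊆ termVarFinset t := by
  induction g using WellFoundedLT.induction generalizing t with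
  | _ g ih =>
  cases ht with
  | var h => exact ⟨_, .var h, fun _ => List.count_le_length, subset_rfl⟩
  | const h => exact absurd h (hnc _ _)
  | or_left h ha ht =>
    obtain ⟨t', ht', hrf, hsub⟩ := ih _ (C.wf _ _ _ (.inl h)).1 ht
    exact ⟨t', .or_left h ha ht', hrf, hsub⟩
  | or_right h hb ht =>
    obtain ⟨t', ht', hrf, hsub⟩ := ih _ (C.wf _ _ _ (.inl h)).2 ht
    exact ⟨t', .or_right h hb ht', hrf, hsub⟩
  | @and _ a b t₁ t₂ h ha hb ht₁ ht₂ =>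
    obtain ⟨s₁, hs₁, hs₁t⟩ := exists_minimalTerm_subset ht₁
    obtain ⟨s₂, hs₂, hs₂t⟩ := exists_minimalTerm_subset ht₂
    obtain ⟨t₁', ht₁', hrf₁, h₁⟩ := ih _ (C.wf _ _ _ (.inr h)).1 hs₁.1
    obtain ⟨t₂', ht₂', hrf₂, h₂⟩ := ih _ (C.wf _ _ _ (.inr h)).2 hs₂.1
    have hdisj : Disjoint (termVarFinset t₁') (termVarFinset t₂') :=
      Finset.disjoint_left.2 fun v hv₁ hv₂ => hml _ a b h ha hb v
        ⟨(hs₁.of_subset ht₁' h₁).depends hnc hv₁, (hs₂.of_subset ht₂' h₂).depends hnc hv₂⟩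
    refine ⟨t₁' ++ t₂', .and h ha hb ht₁' ht₂', hrf₁.append hrf₂ hdisj, ?_⟩
    rw [termVarFinset_append, termVarFinset_append]
    exact Finset.union_subset_union (h₁.trans hs₁t) (h₂.trans hs₂t)

end Circuit

/-- **Companion lemma.** Let `g` be a gate of a monotone multilinear Boolean
circuit containing no Boolean-constant input gates, and let `t ∈ T(g)`. Then
there is a term `t' ∈ T(g)` without variable repetitions such that `t' ≤ t`,
i.e., for every variable `v` the number of occurrences of `v` in `t'` does not
exceed that in `t`. -/
theorem companion_lemma {V : Type} [DecidableEq V] (C : Circuit V)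
    (hml : C.Multilinear) (hnc : C.NoConstants)
    (g : Fin C.n) (t : List (V ⊕ Bool)) (ht : C.MemTerms g t) :
    ∃ t' : List (V ⊕ Bool), C.MemTerms g t' ∧
      (∀ v : V, t'.count (Sum.inl v) ≤ 1) ∧
      (∀ v : V, t'.count (Sum.inl v) ≤ t.count (Sum.inl v)) := by
  obtain ⟨t', ht', hrf, hsub⟩ := C.exists_repetitionFree_subset hml hnc g ht
  exact ⟨t', ht', hrf, hrf.count_le_count hsub⟩

end MC
end

section
/- For all integers k ≥ 2 and n ≥ 1, the function Isol_{k,n} admits a Π₄ monotone strictly k-multilinear Boolean circuit with k·n^{k−1}·(n−2) + n^{k−1} OR gates and k·n^{k−1} − 1 AND gates, in which at least a 1/n fraction of the input variables occur at most once in any term produced by the circuit. -/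
open BigOperators

/-! Call a cell special if its coordinates sum to `0` modulo `n`; every line contains exactly one
special cell. Hence `Isol` holds iff for each special cell `x`, either `x` is `1` or each of the `k`
punctured lines through `x` contains a `1`: an AND of `n^{k-1}` formulas `x ∨ ⋀_d ⋁ (line_d x \ x)`,
which is `Π₄`. A special cell lies on no punctured line through another special cell, and any cell
lies on at most one of them per direction, so variables occur at most `k` times in a term, and
special ones at most once. Listing the gates of this formula in post-order gives the circuit, whose
terms, alternation depth and gate counts are read off the formula. -/

namespace MC

-- `List.count` on `V ⊕ Bool` uses the derived `BEq` of `Sum`, which has no `LawfulBEq` instance.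
instance {α β : Type*} [BEq α] [LawfulBEq α] [BEq β] [LawfulBEq β] : LawfulBEq (α ⊕ β) where
  eq_of_beq {a b} h := by
    cases a <;> cases b
    · exact congrArg Sum.inl (eq_of_beq (α := α) h)
    · cases h
    · cases h
    · exact congrArg Sum.inr (eq_of_beq (α := β) h)
  rfl {a} := by
    cases a with
    | inl x => exact (beq_self_eq_true x : (x == x) = true)
    | inr y => exact (beq_self_eq_true y : (y == y) = true)

theorem card_filter_getElem_eq_countP {α : Type} (L : List α) (p : α → Bool) :
    (Finset.univ.filter fun i : Fin L.length => p L[i] = true).card = L.countP p := by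
  induction L with
  | nil => simp
  | cons x xs ih =>
    rw [Finset.card_filter]
    simp only [List.length_cons]
    rw [Fin.sum_univ_succ, List.countP_cons, ← ih, Finset.card_filter]
    by_cases hx : p x <;> simp [hx, add_comm]

namespace Circuit

variable {V : Type} {C : Circuit V} {i : Fin C.n} {t : List (V ⊕ Bool)}

theorem memTerms_iff_of_label_var {v : V} (h : C.label i = .var v) :
    C.MemTerms i t ↔ t = [Sum.inl v] := by
  constructor
  · intro ht
    cases ht <;> simp_all
  · rintro rfl
    exact .var h

theorem memTerms_iff_of_label_const {b : Bool} (h : C.label i = .const b) :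
    C.MemTerms i t ↔ t = [Sum.inr b] := by
  constructor
  · intro ht
    cases ht <;> simp_all
  · rintro rfl
    exact .const h

theorem memTerms_iff_of_label_or {a b : ℕ} (h : C.label i = .or a b) :
    C.MemTerms i t ↔
      C.MemTerms ⟨a, (C.wf i a b (.inl h)).1.trans i.2⟩ t ∨
        C.MemTerms ⟨b, (C.wf i a b (.inl h)).2.trans i.2⟩ t := by
  constructor
  · intro ht
    cases ht with
    | or_left h' _ ht =>
      obtain ⟨rfl, rfl⟩ := GateLabel.or.inj (h.symm.trans h')
      exact .inl ht
    | or_right h' _ ht =>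
      obtain ⟨rfl, rfl⟩ := GateLabel.or.inj (h.symm.trans h')
      exact .inr ht
    | _ => simp_all
  · rintro (ht | ht)
    · exact .or_left h _ ht
    · exact .or_right h _ ht

theorem memTerms_iff_of_label_and {a b : ℕ} (h : C.label i = .and a b) :
    C.MemTerms i t ↔
      ∃ t₁, C.MemTerms ⟨a, (C.wf i a b (.inr h)).1.trans i.2⟩ t₁ ∧
        ∃ t₂, C.MemTerms ⟨b, (C.wf i a b (.inr h)).2.trans i.2⟩ t₂ ∧ t₁ ++ t₂ = t := by
  constructor
  · intro ht
    cases ht with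
    | and h' _ _ ht₁ ht₂ =>
      obtain ⟨rfl, rfl⟩ := GateLabel.and.inj (h.symm.trans h')
      exact ⟨_, ht₁, _, ht₂, rfl⟩
    | _ => simp_all
  · rintro ⟨t₁, ht₁, t₂, ht₂, rfl⟩
    exact .and h _ _ ht₁ ht₂

end Circuit

inductive Formula (V : Type) where
  | var (v : V)
  | const (b : Bool)
  | or (f g : Formula V)
  | and (f g : Formula V)

namespace Formula

variable {V : Type}

def terms : Formula V → Set (List (V ⊕ Bool))
  | var v => {[Sum.inl v]}
  | const b => {[Sum.inr b]}
  | or f g => f.terms ∪ g.terms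
  | and f g => Set.image2 (· ++ ·) f.terms g.terms

def eval (σ : V → Bool) : Formula V → Prop
  | var v => σ v = true
  | const b => b = true
  | or f g => f.eval σ ∨ g.eval σ
  | and f g => f.eval σ ∧ g.eval σ

theorem termEval_append (σ : V → Bool) (t₁ t₂ : List (V ⊕ Bool)) :
    termEval σ (t₁ ++ t₂) = (termEval σ t₁ && termEval σ t₂) :=
  List.all_append

theorem eval_iff_exists_mem_terms (σ : V → Bool) (f : Formula V) :
    f.eval σ ↔ ∃ t ∈ f.terms, termEval σ t = true := by
  induction f with
  | var v => simp [eval, terms, termEval, litEval]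
  | const b => simp [eval, terms, termEval, litEval]
  | or f g ihf ihg => simp only [eval, terms, ihf, ihg, Set.mem_union, or_and_right, exists_or]
  | and f g ihf ihg =>
    simp only [eval, terms, ihf, ihg, Set.mem_image2]
    constructor
    · rintro ⟨⟨t₁, ht₁, e₁⟩, t₂, ht₂, e₂⟩
      exact ⟨_, ⟨t₁, ht₁, t₂, ht₂, rfl⟩, by rw [termEval_append, e₁, e₂]; rfl⟩
    · rintro ⟨_, ⟨t₁, ht₁, t₂, ht₂, rfl⟩, e⟩
      rw [termEval_append, Bool.and_eq_true] at e
      exact ⟨⟨t₁, ht₁, e.1⟩, t₂, ht₂, e.2⟩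

def maxOcc [DecidableEq V] (v : V) : Formula V → ℕ
  | var w => if w = v then 1 else 0
  | const _ => 0
  | or f g => max (f.maxOcc v) (g.maxOcc v)
  | and f g => f.maxOcc v + g.maxOcc v

theorem count_le_maxOcc [DecidableEq V] {f : Formula V} {t : List (V ⊕ Bool)} (ht : t ∈ f.terms)
    (v : V) : t.count (Sum.inl v) ≤ f.maxOcc v := by
  induction f generalizing t with
  | var w => rw [ht]; simp [maxOcc, List.count_singleton]
  | const b => rw [ht]; simp
  | or f g ihf ihg =>
    rcases ht with ht | ht
    · exact (ihf ht).trans (le_max_left _ _)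
    · exact (ihg ht).trans (le_max_right _ _)
  | and f g ihf ihg =>
    obtain ⟨t₁, ht₁, t₂, ht₂, rfl⟩ := ht
    rw [List.count_append]
    exact Nat.add_le_add (ihf ht₁) (ihg ht₂)

def subformulas : Formula V → Set (Formula V)
  | var v => {var v}
  | const b => {const b}
  | or f g => insert (or f g) (f.subformulas ∪ g.subformulas)
  | and f g => insert (and f g) (f.subformulas ∪ g.subformulas)

theorem maxOcc_le_of_mem_subformulas [DecidableEq V] {f' f : Formula V}
    (h : f' ∈ f.subformulas) (v : V) : f'.maxOcc v ≤ f.maxOcc v := by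
  induction f with
  | var w => rw [h]
  | const b => rw [h]
  | or f g ihf ihg =>
    rcases h with rfl | h | h
    · rfl
    · exact (ihf h).trans (le_max_left _ _)
    · exact (ihg h).trans (le_max_right _ _)
  | and f g ihf ihg =>
    rcases h with rfl | h | h
    · rfl
    · exact (ihf h).trans (Nat.le_add_right _ _)
    · exact (ihg h).trans (Nat.le_add_left _ _)

def orCount : Formula V → ℕ
  | var _ | const _ => 0
  | or f g => f.orCount + g.orCount + 1
  | and f g => f.orCount + g.orCount

def andCount : Formula V → ℕ
  | var _ | const _ => 0
  | or f g => f.andCount + g.andCount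
  | and f g => f.andCount + g.andCount + 1

/-- The kind of the top gate, encoded as the last block in `Circuit.AltDepth`. -/
def top : Formula V → Option Bool
  | var _ | const _ => none
  | or _ _ => some false
  | and _ _ => some true

def altDepth : Formula V → ℕ
  | var _ | const _ => 0
  | or f g => max (f.altDepth + if f.top = some false then 0 else 1)
      (g.altDepth + if g.top = some false then 0 else 1)
  | and f g => max (f.altDepth + if f.top = some true then 0 else 1)
      (g.altDepth + if g.top = some true then 0 else 1)

/-- The number of alternation blocks on a path through `f` that continues into a gate of kind `b`. -/
def blocksUnder (b : Bool) (f : Formula V) : ℕ :=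
  f.altDepth + if f.top = some b then 0 else 1

theorem altDepth_or (f g : Formula V) :
    (or f g).altDepth = max (f.blocksUnder false) (g.blocksUnder false) := rfl

theorem altDepth_and (f g : Formula V) :
    (and f g).altDepth = max (f.blocksUnder true) (g.blocksUnder true) := rfl

theorem altDepth_le_blocksUnder (b : Bool) (f : Formula V) : f.altDepth ≤ f.blocksUnder b :=
  Nat.le_add_right _ _

theorem blocksUnder_le (b : Bool) (f : Formula V) : f.blocksUnder b ≤ f.altDepth + 1 := by
  unfold blocksUnder
  split_ifs <;> omega

theorem ite_le_blocksUnder {f : Formula V} {d : ℕ} (hd : d ≤ f.altDepth) (b : Bool) :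
    (if f.top = some b then d else d + 1) ≤ f.blocksUnder b := by
  unfold blocksUnder
  split_ifs <;> omega

def size : Formula V → ℕ
  | var _ | const _ => 1
  | or f g | and f g => f.size + g.size + 1

theorem size_pos (f : Formula V) : 0 < f.size := by
  cases f <;> simp [size]

def rootLabel (o : ℕ) : Formula V → GateLabel V
  | var v => .var v
  | const b => .const b
  | or f g => .or (o + f.size - 1) (o + f.size + g.size - 1)
  | and f g => .and (o + f.size - 1) (o + f.size + g.size - 1)

/-- The gates of `f` in post-order, numbered from `o` on. -/
def gates (o : ℕ) : Formula V → List (GateLabel V)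
  | var v => [.var v]
  | const b => [.const b]
  | or f g => f.gates o ++ g.gates (o + f.size) ++ [(or f g).rootLabel o]
  | and f g => f.gates o ++ g.gates (o + f.size) ++ [(and f g).rootLabel o]

theorem length_gates (o : ℕ) (f : Formula V) : (f.gates o).length = f.size := by
  induction f generalizing o <;> simp [gates, size, Nat.add_assoc, *]

theorem getElem?_gates_size_sub_one (o : ℕ) (f : Formula V) :
    (f.gates o)[f.size - 1]? = some (f.rootLabel o) := by
  cases f <;> simp [gates, size, rootLabel, length_gates]

theorem rootLabel_children_lt {o a b : ℕ} {f : Formula V}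
    (h : f.rootLabel o = .or a b ∨ f.rootLabel o = .and a b) :
    a < o + f.size - 1 ∧ b < o + f.size - 1 := by
  cases f with
  | var v => simp [rootLabel] at h
  | const c => simp [rootLabel] at h
  | or f g =>
    have := f.size_pos
    have := g.size_pos
    simp only [rootLabel, GateLabel.or.injEq, reduceCtorEq, or_false] at h
    simp only [size]
    omega
  | and f g =>
    have := f.size_pos
    have := g.size_pos
    simp only [rootLabel, GateLabel.and.injEq, reduceCtorEq, false_or] at h
    simp only [size]
    omega

/-- The gates of `f`, numbered from `o` on, occupy positions `o, o + 1, …` of `L`. -/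
def Placed (L : List (GateLabel V)) (o : ℕ) (f : Formula V) : Prop :=
  f.gates o <+: L.drop o

theorem placed_gates (f : Formula V) : Placed (f.gates 0) 0 f := by
  simp [Placed]

namespace Placed

variable {L : List (GateLabel V)} {o : ℕ}

theorem of_node {f g : Formula V} {top : GateLabel V}
    (h : f.gates o ++ g.gates (o + f.size) ++ [top] <+: L.drop o) :
    Placed L o f ∧ Placed L (o + f.size) g := by
  obtain ⟨u, hu⟩ := h
  refine ⟨⟨g.gates (o + f.size) ++ [top] ++ u, by rw [← hu]; simp⟩,
    ⟨[top] ++ u, ?_⟩⟩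
  rw [← List.drop_drop, ← hu]
  simp [length_gates]

theorem or {f g : Formula V} (h : Placed L o (.or f g)) :
    Placed L o f ∧ Placed L (o + f.size) g :=
  of_node h

theorem and {f g : Formula V} (h : Placed L o (.and f g)) :
    Placed L o f ∧ Placed L (o + f.size) g :=
  of_node h

theorem getElem?_root {f : Formula V} (h : Placed L o f) :
    L[o + f.size - 1]? = some (f.rootLabel o) := by
  obtain ⟨u, hu⟩ := h
  have := f.size_pos
  rw [show o + f.size - 1 = o + (f.size - 1) by omega, ← List.getElem?_drop, ← hu,
    List.getElem?_append_left (by rw [length_gates]; omega), getElem?_gates_size_sub_one]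

theorem exists_root {f : Formula V} (h : Placed L o f) {j : ℕ} (hj : j < f.size) :
    ∃ o' f', f' ∈ f.subformulas ∧ Placed L o' f' ∧ o' + f'.size - 1 = o + j := by
  induction f generalizing o j with
  | var v => exact ⟨o, _, rfl, h, by simp_all [size]⟩
  | const b => exact ⟨o, _, rfl, h, by simp_all [size]⟩
  | or f g ihf ihg | and f g ihf ihg =>
    obtain ⟨hf, hg⟩ := of_node h
    simp only [size] at hj
    by_cases hjf : j < f.size
    · obtain ⟨o', f', hs, hp, hr⟩ := ihf hf hjf
      exact ⟨o', f', .inr (.inl hs), hp, hr⟩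
    by_cases hjg : j - f.size < g.size
    · obtain ⟨o', f', hs, hp, hr⟩ := ihg hg hjg
      exact ⟨o', f', .inr (.inr hs), hp, by omega⟩
    · exact ⟨o, _, .inl rfl, h, by simp only [size]; omega⟩

end Placed

theorem lt_of_getElem_gates {F : Formula V} {i a b : ℕ} (hi : i < (F.gates 0).length)
    (h : (F.gates 0)[i] = .or a b ∨ (F.gates 0)[i] = .and a b) : a < i ∧ b < i := by
  obtain ⟨o, f, -, hp, hr⟩ := (placed_gates F).exists_root (j := i) (by rwa [← length_gates 0])
  have hroot := hp.getElem?_root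
  rw [hr, zero_add, List.getElem?_eq_getElem hi, Option.some_inj] at hroot
  rw [hroot] at h
  have := rootLabel_children_lt h
  omega

def toCircuit (F : Formula V) : Circuit V where
  n := (F.gates 0).length
  label i := (F.gates 0)[i]
  wf i _ _ h := lt_of_getElem_gates i.2 h

def root (F : Formula V) : Fin F.toCircuit.n :=
  ⟨F.size - 1, by simp only [toCircuit, length_gates]; exact Nat.sub_lt F.size_pos one_pos⟩

variable {F : Formula V}

theorem toCircuit_label_of_placed {o : ℕ} {f : Formula V} (hp : Placed (F.gates 0) o f)
    {i : Fin F.toCircuit.n} (hi : (i : ℕ) = o + f.size - 1) :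
    F.toCircuit.label i = f.rootLabel o := by
  have hroot := hp.getElem?_root
  rw [← hi, List.getElem?_eq_getElem i.2] at hroot
  exact Option.some_inj.mp hroot

theorem memTerms_toCircuit_iff {o : ℕ} {f : Formula V} (hp : Placed (F.gates 0) o f)
    {i : Fin F.toCircuit.n} (hi : (i : ℕ) = o + f.size - 1) {t : List (V ⊕ Bool)} :
    F.toCircuit.MemTerms i t ↔ t ∈ f.terms := by
  induction f generalizing o i t with
  | var v => exact Circuit.memTerms_iff_of_label_var (toCircuit_label_of_placed hp hi)
  | const b => exact Circuit.memTerms_iff_of_label_const (toCircuit_label_of_placed hp hi)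
  | or f g ihf ihg =>
    obtain ⟨hf, hg⟩ := hp.or
    have hlabel : F.toCircuit.label i = .or (o + f.size - 1) (o + f.size + g.size - 1) :=
      toCircuit_label_of_placed hp hi
    rw [Circuit.memTerms_iff_of_label_or hlabel, ihf hf (i := ⟨o + f.size - 1, _⟩) rfl,
      ihg hg (i := ⟨o + f.size + g.size - 1, _⟩) rfl]
    rfl
  | and f g ihf ihg =>
    obtain ⟨hf, hg⟩ := hp.and
    have hlabel : F.toCircuit.label i = .and (o + f.size - 1) (o + f.size + g.size - 1) :=
      toCircuit_label_of_placed hp hi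
    simp only [Circuit.memTerms_iff_of_label_and hlabel, ihf hf (i := ⟨o + f.size - 1, _⟩) rfl,
      ihg hg (i := ⟨o + f.size + g.size - 1, _⟩) rfl]
    rfl

theorem memTerms_root_iff {t : List (V ⊕ Bool)} :
    F.toCircuit.MemTerms F.root t ↔ t ∈ F.terms :=
  memTerms_toCircuit_iff (placed_gates F) (by simp [root])

theorem gateFun_root (σ : V → Bool) : F.toCircuit.gateFun F.root σ ↔ F.eval σ := by
  simp only [Circuit.gateFun, memTerms_root_iff, eval_iff_exists_mem_terms]

theorem count_le_maxOcc_of_memTerms [DecidableEq V] {g : Fin F.toCircuit.n}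
    {t : List (V ⊕ Bool)} (ht : F.toCircuit.MemTerms g t) (v : V) :
    t.count (Sum.inl v) ≤ F.maxOcc v := by
  obtain ⟨o, f, hs, hp, hr⟩ := (placed_gates F).exists_root (j := g) (by
    simpa [toCircuit, length_gates] using g.2)
  rw [memTerms_toCircuit_iff hp (by omega)] at ht
  exact (count_le_maxOcc ht v).trans (maxOcc_le_of_mem_subformulas hs v)

theorem altDepth_toCircuit_le {o : ℕ} {f : Formula V} (hp : Placed (F.gates 0) o f)
    {i : Fin F.toCircuit.n} (hi : (i : ℕ) = o + f.size - 1) {l : Option Bool} {c : ℕ}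
    (hd : F.toCircuit.AltDepth i l c) : l = f.top ∧ c ≤ f.altDepth := by
  induction f generalizing o i l c with
  | var v =>
    have hlabel : F.toCircuit.label i = .var v := toCircuit_label_of_placed hp hi
    cases hd <;> simp_all [top, altDepth]
  | const b =>
    have hlabel : F.toCircuit.label i = .const b := toCircuit_label_of_placed hp hi
    cases hd <;> simp_all [top, altDepth]
  | or f g ihf ihg =>
    obtain ⟨hf, hg⟩ := hp.or
    have hlabel : F.toCircuit.label i = .or (o + f.size - 1) (o + f.size + g.size - 1) :=
      toCircuit_label_of_placed hp hi
    cases hd with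
    | or_step h hab _ hsub =>
      obtain ⟨rfl, rfl⟩ := GateLabel.or.inj (hlabel.symm.trans h)
      refine ⟨rfl, ?_⟩
      rcases hab with rfl | rfl
      · obtain ⟨rfl, hd⟩ := ihf hf rfl hsub
        exact (ite_le_blocksUnder hd false).trans (le_max_left _ _)
      · obtain ⟨rfl, hd⟩ := ihg hg rfl hsub
        exact (ite_le_blocksUnder hd false).trans (le_max_right _ _)
    | _ => simp_all [GateLabel.isOp]
  | and f g ihf ihg =>
    obtain ⟨hf, hg⟩ := hp.and
    have hlabel : F.toCircuit.label i = .and (o + f.size - 1) (o + f.size + g.size - 1) :=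
      toCircuit_label_of_placed hp hi
    cases hd with
    | and_step h hab _ hsub =>
      obtain ⟨rfl, rfl⟩ := GateLabel.and.inj (hlabel.symm.trans h)
      refine ⟨rfl, ?_⟩
      rcases hab with rfl | rfl
      · obtain ⟨rfl, hd⟩ := ihf hf rfl hsub
        exact (ite_le_blocksUnder hd true).trans (le_max_left _ _)
      · obtain ⟨rfl, hd⟩ := ihg hg rfl hsub
        exact (ite_le_blocksUnder hd true).trans (le_max_right _ _)
    | _ => simp_all [GateLabel.isOp]

theorem altDepthLE_toCircuit {d : ℕ} (h : F.altDepth ≤ d) :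
    F.toCircuit.AltDepthLE (fun _ : Unit => F.root) d := fun _ _ _ hd =>
  ((altDepth_toCircuit_le (placed_gates F) (by simp [root]) hd).2).trans h

theorem isAnd_label_root (h : F.top = some true) : (F.toCircuit.label F.root).isAnd = true := by
  rw [toCircuit_label_of_placed (placed_gates F) (by simp [root])]
  cases F <;> simp_all [top, rootLabel, GateLabel.isAnd]

theorem countP_isOr_gates (o : ℕ) (f : Formula V) : (f.gates o).countP GateLabel.isOr = f.orCount := by
  induction f generalizing o <;> simp [gates, orCount, rootLabel, GateLabel.isOr, Nat.add_assoc, *]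

theorem countP_isAnd_gates (o : ℕ) (f : Formula V) :
    (f.gates o).countP GateLabel.isAnd = f.andCount := by
  induction f generalizing o <;> simp [gates, andCount, rootLabel, GateLabel.isAnd, Nat.add_assoc, *]

theorem orGateCount_toCircuit : F.toCircuit.orGateCount = F.orCount :=
  (card_filter_getElem_eq_countP _ _).trans (countP_isOr_gates 0 F)

theorem andGateCount_toCircuit : F.toCircuit.andGateCount = F.andCount :=
  (card_filter_getElem_eq_countP _ _).trans (countP_isAnd_gates 0 F)

def bigOr : List (Formula V) → Formula V
  | [] => const false
  | [f] => f
  | f :: g :: fs => or f (bigOr (g :: fs))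

def bigAnd : List (Formula V) → Formula V
  | [] => const true
  | [f] => f
  | f :: g :: fs => and f (bigAnd (g :: fs))

variable (l : List (Formula V))

theorem eval_bigOr (σ : V → Bool) : (bigOr l).eval σ ↔ ∃ f ∈ l, f.eval σ := by
  fun_induction bigOr l <;> simp_all [eval]

theorem eval_bigAnd (σ : V → Bool) : (bigAnd l).eval σ ↔ ∀ f ∈ l, f.eval σ := by
  fun_induction bigAnd l <;> simp_all [eval]

theorem maxOcc_bigOr_le [DecidableEq V] {v : V} {a : ℕ} (h : ∀ f ∈ l, f.maxOcc v ≤ a) :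
    (bigOr l).maxOcc v ≤ a := by
  fun_induction bigOr l <;> simp_all [maxOcc]

theorem maxOcc_bigAnd [DecidableEq V] (v : V) :
    (bigAnd l).maxOcc v = (l.map (maxOcc v)).sum := by
  fun_induction bigAnd l <;> simp_all [maxOcc]

theorem orCount_bigOr : (bigOr l).orCount = (l.map orCount).sum + (l.length - 1) := by
  fun_induction bigOr l <;> simp_all [orCount, Nat.add_assoc]

theorem andCount_bigOr : (bigOr l).andCount = (l.map andCount).sum := by
  fun_induction bigOr l <;> simp_all [andCount]

theorem orCount_bigAnd : (bigAnd l).orCount = (l.map orCount).sum := by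
  fun_induction bigAnd l <;> simp_all [orCount]

theorem andCount_bigAnd : (bigAnd l).andCount = (l.map andCount).sum + (l.length - 1) := by
  fun_induction bigAnd l <;> simp_all [andCount, Nat.add_assoc]

theorem blocksUnder_bigOr_le {a : ℕ} (h : ∀ f ∈ l, f.altDepth ≤ a) :
    (bigOr l).blocksUnder false ≤ a + 1 := by
  fun_induction bigOr l with
  | case1 => simp [blocksUnder, altDepth, top]
  | case2 f => exact (blocksUnder_le _ f).trans (by simpa using h)
  | case3 f g fs ih =>
    simp only [List.mem_cons, forall_eq_or_imp] at h ih
    simp only [blocksUnder, top, if_true, add_zero, altDepth_or]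
    exact max_le ((blocksUnder_le _ f).trans (by omega)) (ih h.2)

theorem blocksUnder_bigAnd_le {a : ℕ} (h : ∀ f ∈ l, f.altDepth ≤ a) :
    (bigAnd l).blocksUnder true ≤ a + 1 := by
  fun_induction bigAnd l with
  | case1 => simp [blocksUnder, altDepth, top]
  | case2 f => exact (blocksUnder_le _ f).trans (by simpa using h)
  | case3 f g fs ih =>
    simp only [List.mem_cons, forall_eq_or_imp] at h ih
    simp only [blocksUnder, top, if_true, add_zero, altDepth_and]
    exact max_le ((blocksUnder_le _ f).trans (by omega)) (ih h.2)

theorem top_bigAnd (hl : 2 ≤ l.length) : (bigAnd l).top = some true := by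
  match l, hl with
  | _ :: _ :: _, _ => rfl

theorem maxOcc_bigOr_var_le [DecidableEq V] (l : List V) (v : V) :
    (bigOr (l.map var)).maxOcc v ≤ if v ∈ l then 1 else 0 :=
  maxOcc_bigOr_le _ fun f hf => by
    obtain ⟨w, hw, rfl⟩ := List.mem_map.1 hf
    by_cases h : w = v
    · subst h
      simp [maxOcc, hw]
    · simp [maxOcc, h]

end Formula

section Grid

noncomputable def puncturedLine {k n : ℕ} (x : Cell k n) (d : Fin k) : List (Cell k n) :=
  (Finset.univ.erase (x d)).toList.map (Function.update x d)

-- Each line contains exactly one of these cells.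
def specials (k n : ℕ) [NeZero n] : Finset (Cell k n) :=
  Finset.univ.filter fun x => ∑ j, x j = 0

variable {k n : ℕ}

theorem mem_puncturedLine {x w : Cell k n} {d : Fin k} :
    w ∈ puncturedLine x d ↔ (∀ j, j ≠ d → w j = x j) ∧ w ≠ x := by
  simp only [puncturedLine, List.mem_map, Finset.mem_toList, Finset.mem_erase, Finset.mem_univ,
    and_true]
  constructor
  · rintro ⟨a, ha, rfl⟩
    refine ⟨fun j hj => Function.update_of_ne hj _ _, fun h => ha ?_⟩
    simpa using congrFun h d
  · rintro ⟨hline, hne⟩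
    have hw : Function.update x d (w d) = w := by
      funext j
      by_cases hj : j = d
      · subst hj
        simp
      · simp [Function.update_of_ne hj, hline j hj]
    refine ⟨w d, fun h => hne ?_, hw⟩
    rw [← hw, h, Function.update_eq_self]

theorem length_puncturedLine (x : Cell k n) (d : Fin k) : (puncturedLine x d).length = n - 1 := by
  simp [puncturedLine, Finset.card_erase_of_mem]

variable [NeZero n]

theorem mem_specials {x : Cell k n} : x ∈ specials k n ↔ ∑ j, x j = 0 := by
  simp [specials]

theorem eq_of_mem_specials {x y : Cell k n} {d : Fin k} (hx : x ∈ specials k n)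
    (hy : y ∈ specials k n) (h : ∀ j, j ≠ d → x j = y j) : x = y := by
  rw [mem_specials, Fintype.sum_eq_add_sum_compl d] at hx hy
  have hrest : ∑ j ∈ {d}ᶜ, x j = ∑ j ∈ {d}ᶜ, y j :=
    Finset.sum_congr rfl fun j hj => h j (by simpa using hj)
  rw [hrest] at hx
  have hd : x d = y d := add_right_cancel (hx.trans hy.symm)
  funext j
  by_cases hj : j = d
  · subst hj
    exact hd
  · exact h j hj

theorem exists_mem_specials_line (d : Fin k) (c : Cell k n) :
    ∃ x ∈ specials k n, ∀ j, j ≠ d → x j = c j := by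
  refine ⟨Function.update c d (-∑ j ∈ Finset.univ \ {d}, c j), ?_,
    fun j hj => Function.update_of_ne hj _ _⟩
  rw [mem_specials, Finset.sum_update_of_mem (Finset.mem_univ d)]
  exact neg_add_cancel _

theorem card_specials (m : ℕ) : (specials (m + 1) n).card = n ^ m := by
  calc (specials (m + 1) n).card = (Finset.univ : Finset (Fin m → Fin n)).card :=
        Finset.card_nbij' Fin.tail (fun c => Fin.cons (-∑ i, c i) c)
          (fun _ _ => Finset.mem_coe.2 (Finset.mem_univ _))
          (fun c _ => by simp [mem_specials, Fin.sum_cons])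
          (fun x hx => by
            rw [Finset.mem_coe, mem_specials, Fin.sum_univ_succ] at hx
            conv_rhs => rw [← Fin.cons_self_tail x, eq_neg_of_add_eq_zero_left hx]
            rfl)
          (fun c _ => Fin.tail_cons _ _)
    _ = n ^ m := by simp

end Grid

section IsolFormula

open Formula

noncomputable def linesFormula {k n : ℕ} (x : Cell k n) : Formula (Cell k n) :=
  bigAnd ((List.finRange k).map fun d => bigOr ((puncturedLine x d).map var))

noncomputable def crossFormula {k n : ℕ} (x : Cell k n) : Formula (Cell k n) :=
  .or (.var x) (linesFormula x)

noncomputable def isolFormula (k n : ℕ) [NeZero n] : Formula (Cell k n) :=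
  bigAnd ((specials k n).toList.map crossFormula)

variable {k n : ℕ}

theorem eval_crossFormula (x : Cell k n) (σ : Cell k n → Bool) :
    (crossFormula x).eval σ ↔ σ x = true ∨ ∀ d, ∃ w ∈ puncturedLine x d, σ w = true := by
  simp [crossFormula, linesFormula, eval, eval_bigAnd, eval_bigOr]

theorem maxOcc_linesFormula_le (x v : Cell k n) :
    (linesFormula x).maxOcc v ≤ ∑ d, if v ∈ puncturedLine x d then 1 else 0 := by
  rw [linesFormula, maxOcc_bigAnd, List.map_map, Fin.sum_univ_def]
  exact List.sum_le_sum fun d _ => maxOcc_bigOr_var_le _ _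

theorem maxOcc_crossFormula_le_card [NeZero k] (x v : Cell k n) :
    (crossFormula x).maxOcc v ≤ (Finset.univ.filter fun d => ∀ j, j ≠ d → v j = x j).card := by
  refine max_le ?_ ((maxOcc_linesFormula_le x v).trans ?_)
  · rw [maxOcc]
    split_ifs with hxv
    · subst hxv
      exact Finset.one_le_card.2 ⟨0, by simp⟩
    · exact Nat.zero_le _
  · rw [Finset.card_filter]
    refine Finset.sum_le_sum fun d _ => ?_
    by_cases hv : v ∈ puncturedLine x d
    · rw [if_pos hv, if_pos (mem_puncturedLine.1 hv).1]
    · simp [hv]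

theorem altDepth_crossFormula_le (x : Cell k n) : (crossFormula x).altDepth ≤ 3 := by
  have hlines : (linesFormula x).altDepth ≤ 2 :=
    (altDepth_le_blocksUnder true _).trans <| blocksUnder_bigAnd_le _ fun f hf => by
      obtain ⟨d, -, rfl⟩ := List.mem_map.1 hf
      refine (altDepth_le_blocksUnder false _).trans (blocksUnder_bigOr_le _ fun f hf => ?_)
      obtain ⟨w, -, rfl⟩ := List.mem_map.1 hf
      rfl
  rw [crossFormula, altDepth_or]
  exact max_le (by simp [blocksUnder, altDepth, top]) ((blocksUnder_le _ _).trans (by omega))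

theorem orCount_crossFormula (x : Cell k n) : (crossFormula x).orCount = k * (n - 2) + 1 := by
  simp [crossFormula, linesFormula, orCount, orCount_bigAnd, orCount_bigOr, length_puncturedLine,
    Function.comp_def, Nat.sub_sub]

theorem andCount_crossFormula (x : Cell k n) : (crossFormula x).andCount = k - 1 := by
  simp [crossFormula, linesFormula, andCount, andCount_bigAnd, andCount_bigOr, Function.comp_def]

variable [NeZero n]

theorem isolFun_iff (σ : Cell k n → Bool) :
    IsolFun k n σ ↔
      ∀ x ∈ specials k n, σ x = true ∨ ∀ d, ∃ w ∈ puncturedLine x d, σ w = true := by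
  constructor
  · intro h x _
    refine (em (σ x = true)).imp id fun hσx d => ?_
    obtain ⟨w, hline, hw⟩ := h d x
    exact ⟨w, mem_puncturedLine.2 ⟨hline, fun hwx => hσx (hwx ▸ hw)⟩, hw⟩
  · intro h d c
    obtain ⟨x, hx, hxc⟩ := exists_mem_specials_line d c
    rcases h x hx with hσ | hlines
    · exact ⟨x, hxc, hσ⟩
    · obtain ⟨w, hw, hσ⟩ := hlines d
      exact ⟨w, fun j hj => ((mem_puncturedLine.1 hw).1 j hj).trans (hxc j hj), hσ⟩

theorem eval_isolFormula (σ : Cell k n → Bool) : (isolFormula k n).eval σ ↔ IsolFun k n σ := by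
  simp [isolFormula, eval_bigAnd, eval_crossFormula, isolFun_iff]

theorem maxOcc_crossFormula_le_of_mem_specials {x v : Cell k n} (hx : x ∈ specials k n)
    (hv : v ∈ specials k n) : (crossFormula x).maxOcc v ≤ if x = v then 1 else 0 := by
  have hlines : (linesFormula x).maxOcc v = 0 := by
    refine Nat.eq_zero_of_le_zero ((maxOcc_linesFormula_le x v).trans_eq ?_)
    refine Finset.sum_eq_zero fun d _ => if_neg fun hmem => ?_
    obtain ⟨hline, hne⟩ := mem_puncturedLine.1 hmem
    exact hne (eq_of_mem_specials hv hx hline)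
  simp only [crossFormula, maxOcc, hlines]
  exact max_le le_rfl (Nat.zero_le _)

theorem maxOcc_isolFormula (v : Cell k n) :
    (isolFormula k n).maxOcc v = ∑ x ∈ specials k n, (crossFormula x).maxOcc v := by
  rw [isolFormula, maxOcc_bigAnd, List.map_map, Finset.sum_map_toList]
  rfl

/-- Each line contains one special cell, so `v` lies on at most one punctured line per direction. -/
theorem maxOcc_isolFormula_le [NeZero k] (v : Cell k n) : (isolFormula k n).maxOcc v ≤ k := by
  rw [maxOcc_isolFormula]
  calc ∑ x ∈ specials k n, (crossFormula x).maxOcc v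
      ≤ ∑ x ∈ specials k n, ∑ d, if ∀ j, j ≠ d → v j = x j then 1 else 0 :=
        Finset.sum_le_sum fun x _ => (maxOcc_crossFormula_le_card x v).trans_eq
          (Finset.card_filter _ _)
    _ = ∑ d, ((specials k n).filter fun x => ∀ j, j ≠ d → v j = x j).card := by
        rw [Finset.sum_comm]
        simp only [Finset.card_filter]
    _ ≤ ∑ _d : Fin k, 1 := Finset.sum_le_sum fun d _ => Finset.card_le_one.2
        fun x hx y hy => eq_of_mem_specials (Finset.mem_filter.1 hx).1 (Finset.mem_filter.1 hy).1
          fun j hj => ((Finset.mem_filter.1 hx).2 j hj).symm.trans ((Finset.mem_filter.1 hy).2 j hj)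
    _ = k := by simp

theorem maxOcc_isolFormula_le_one {v : Cell k n} (hv : v ∈ specials k n) :
    (isolFormula k n).maxOcc v ≤ 1 := by
  rw [maxOcc_isolFormula]
  calc ∑ x ∈ specials k n, (crossFormula x).maxOcc v
      ≤ ∑ x ∈ specials k n, if x = v then 1 else 0 :=
        Finset.sum_le_sum fun x hx => maxOcc_crossFormula_le_of_mem_specials hx hv
    _ = 1 := by simp [hv]

theorem orCount_isolFormula :
    (isolFormula k n).orCount = (specials k n).card * (k * (n - 2) + 1) := by
  simp [isolFormula, orCount_bigAnd, Function.comp_def, orCount_crossFormula]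

theorem andCount_isolFormula :
    (isolFormula k n).andCount = (specials k n).card * (k - 1) + ((specials k n).card - 1) := by
  simp [isolFormula, andCount_bigAnd, Function.comp_def, andCount_crossFormula]

theorem altDepth_isolFormula_le : (isolFormula k n).altDepth ≤ 4 :=
  (altDepth_le_blocksUnder true _).trans <| blocksUnder_bigAnd_le _ fun f hf => by
    obtain ⟨x, -, rfl⟩ := List.mem_map.1 hf
    exact altDepth_crossFormula_le x

theorem top_isolFormula (h : 2 ≤ (specials k n).card) : (isolFormula k n).top = some true :=
  top_bigAnd _ (by simpa [isolFormula] using h)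

end IsolFormula

section SingleCell

open Formula

/-- For `n = 1` the grid is a single cell; the constants pad the formula to the gate counts
and the AND output of the general construction. -/
noncomputable def singleCellFormula (k : ℕ) : Formula (Cell k 1) :=
  bigAnd (.or (.var 0) (.const false) :: List.replicate (k - 1) (.const true))

variable {k : ℕ}

theorem isolFun_one_iff [NeZero k] (σ : Cell k 1 → Bool) : IsolFun k 1 σ ↔ σ 0 = true := by
  constructor
  · intro h
    obtain ⟨x, -, hx⟩ := h 0 0
    rwa [Subsingleton.elim x 0] at hx
  · exact fun h _ _ => ⟨0, fun _ _ => Subsingleton.elim _ _, h⟩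

theorem eval_singleCellFormula (σ : Cell k 1 → Bool) :
    (singleCellFormula k).eval σ ↔ σ 0 = true := by
  simp [singleCellFormula, eval_bigAnd, eval]

theorem top_singleCellFormula (hk : 2 ≤ k) : (singleCellFormula k).top = some true :=
  top_bigAnd _ (by rw [List.length_cons, List.length_replicate]; omega)

theorem altDepth_singleCellFormula_le : (singleCellFormula k).altDepth ≤ 2 :=
  (altDepth_le_blocksUnder true _).trans <| blocksUnder_bigAnd_le _ fun f hf => by
    simp only [List.mem_cons, List.mem_replicate] at hf
    rcases hf with rfl | ⟨-, rfl⟩ <;> simp [altDepth, top]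

theorem maxOcc_singleCellFormula_le_one (v : Cell k 1) : (singleCellFormula k).maxOcc v ≤ 1 := by
  simp only [singleCellFormula, maxOcc_bigAnd, List.map_cons, List.map_replicate, maxOcc,
    List.sum_cons, List.sum_replicate, smul_zero, add_zero, max_eq_left (Nat.zero_le _)]
  split_ifs <;> omega

theorem orCount_singleCellFormula : (singleCellFormula k).orCount = 1 := by
  simp [singleCellFormula, orCount_bigAnd, orCount]

theorem andCount_singleCellFormula : (singleCellFormula k).andCount = k - 1 := by
  simp [singleCellFormula, andCount_bigAnd, andCount]

end SingleCell

theorem exists_isolFormula {k n : ℕ} (hk : 2 ≤ k) (hn : 1 ≤ n) :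
    ∃ F : Formula (Cell k n), (∀ σ, F.eval σ ↔ IsolFun k n σ) ∧ F.top = some true ∧
      F.altDepth ≤ 4 ∧ (∀ v, F.maxOcc v ≤ k) ∧
      F.orCount = k * n ^ (k - 1) * (n - 2) + n ^ (k - 1) ∧
      F.andCount = k * n ^ (k - 1) - 1 ∧
      ∃ Y : Finset (Cell k n), n ^ k ≤ Y.card * n ∧ ∀ v ∈ Y, F.maxOcc v ≤ 1 := by
  obtain ⟨m, rfl⟩ : ∃ m, k = m + 1 := ⟨k - 1, by omega⟩
  have : NeZero n := ⟨by omega⟩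
  have hcard := card_specials (n := n) m
  have hY : n ^ (m + 1) ≤ (specials (m + 1) n).card * n := by rw [hcard, pow_succ]
  simp only [Nat.add_sub_cancel]
  rcases hn.eq_or_lt with rfl | hn
  · refine ⟨singleCellFormula (m + 1), fun σ => (eval_singleCellFormula σ).trans
      (isolFun_one_iff σ).symm, top_singleCellFormula (by omega),
      altDepth_singleCellFormula_le.trans (by norm_num),
      fun v => (maxOcc_singleCellFormula_le_one v).trans (by omega),
      by simp [orCount_singleCellFormula], by simp [andCount_singleCellFormula], _, hY,
      fun v _ => maxOcc_singleCellFormula_le_one v⟩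
  · have hN : 2 ≤ n ^ m := calc
      2 ≤ n := hn
      _ ≤ n ^ m := Nat.le_self_pow (by omega) n
    refine ⟨isolFormula (m + 1) n, eval_isolFormula, top_isolFormula (hcard ▸ hN),
      altDepth_isolFormula_le, maxOcc_isolFormula_le, ?_, ?_, _, hY,
      fun v hv => maxOcc_isolFormula_le_one hv⟩
    · rw [orCount_isolFormula, hcard]
      ring
    · rw [andCount_isolFormula, hcard, Nat.add_sub_cancel]
      have : (m + 1) * n ^ m = n ^ m * m + n ^ m := by ring
      omega

/-- For all integers `k ≥ 2` and `n ≥ 1`, the function `Isol_{k,n}` admits a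
`Π₄` monotone strictly `k`-multilinear Boolean circuit with
`k·n^{k−1}·(n−2) + n^{k−1}` OR gates and `k·n^{k−1} − 1` AND gates, in which
at least a `1/n` fraction of the `n^k` input variables occur at most once in
any term produced by the circuit. -/
theorem isol_pi4_circuit (k n : ℕ) (hk : 2 ≤ k) (hn : 1 ≤ n) :
    ∃ (C : Circuit (Cell k n)) (o : Fin C.n),
      (∀ σ : Cell k n → Bool, C.gateFun o σ ↔ IsolFun k n σ) ∧
      C.IsPi (fun _ : Unit => o) 4 ∧
      C.StrictlyQMultilinear k ∧
      C.orGateCount = k * n ^ (k - 1) * (n - 2) + n ^ (k - 1) ∧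
      C.andGateCount = k * n ^ (k - 1) - 1 ∧
      ∃ Y : Finset (Cell k n), n ^ k ≤ Y.card * n ∧
        ∀ v ∈ Y, ∀ (g : Fin C.n) (t : List (Cell k n ⊕ Bool)),
          C.MemTerms g t → t.count (Sum.inl v) ≤ 1 := by
  obtain ⟨F, hEval, hTop, hDepth, hOcc, hOr, hAnd, Y, hY, hOccY⟩ := exists_isolFormula hk hn
  refine ⟨F.toCircuit, F.root, fun σ => (Formula.gateFun_root σ).trans (hEval σ),
    ⟨fun _ => Formula.isAnd_label_root hTop, Formula.altDepthLE_toCircuit hDepth⟩,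
    fun g t ht v => (Formula.count_le_maxOcc_of_memTerms ht v).trans (hOcc v),
    Formula.orGateCount_toCircuit.trans hOr, Formula.andGateCount_toCircuit.trans hAnd,
    Y, hY, fun v hv g t ht => (Formula.count_le_maxOcc_of_memTerms ht v).trans (hOccY v hv)⟩

end MC
end

section
/- Let C be a monotone Boolean circuit computing Isol_{k,n}, and let g be a gate of C computing a disjunction of variables. If the entries of the input matrix represented by the variables in this disjunction do not all belong to a common line, then the circuit obtained from C by replacing the gate g with the Boolean constant 1 still computes Isol_{k,n}. -/
open BigOperators

/-!
Replacing `g` by `1` can only make the circuit accept more, so the new circuit still accepts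
every input satisfying `Isol`. Conversely, if `σ` falsifies `Isol`, some line is all `0`
under `σ`; set every entry off that line to `1` to get `τ ≥ σ`, which still falsifies `Isol`.
Since `W` is not contained in that line, `g` is `1` at `τ`, so at `τ` the two circuits agree;
by monotonicity the new circuit rejects `σ`.
-/

namespace MC

variable {V : Type}

theorem termEval_append (σ : V → Bool) (t₁ t₂ : List (V ⊕ Bool)) :
    termEval σ (t₁ ++ t₂) = (termEval σ t₁ && termEval σ t₂) :=
  List.all_append

theorem termEval_mono (t : List (V ⊕ Bool)) : Monotone fun σ : V → Bool => termEval σ t := by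
  intro σ τ hστ hσ
  simp only [termEval, List.all_eq_true] at hσ ⊢
  intro x hx
  cases x with
  | inl v => exact (Bool.le_true _).antisymm ((hσ _ hx).symm.trans_le (hστ v))
  | inr b => exact hσ _ hx

namespace Circuit

theorem gateFun_mono (C : Circuit V) (i : Fin C.n) : Monotone (C.gateFun i) :=
  fun _ _ hστ ⟨t, ht, hσt⟩ => ⟨t, ht, termEval_mono t hστ hσt⟩

theorem gateFun_of_label_eq_of_ne {C D : Circuit V} (hn : C.n = D.n) {g : Fin C.n}
    (hlabel : ∀ i, i ≠ g → D.label (Fin.cast hn i) = C.label i) {σ : V → Bool}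
    (hg : D.gateFun (Fin.cast hn g) σ) {i : Fin C.n} (hi : C.gateFun i σ) :
    D.gateFun (Fin.cast hn i) σ := by
  obtain ⟨t, ht, hσt⟩ := hi
  induction ht with
  | @var i v h =>
    obtain rfl | hig := eq_or_ne i g
    · exact hg
    · exact ⟨_, .var ((hlabel i hig).trans h), hσt⟩
  | @const i b h =>
    obtain rfl | hig := eq_or_ne i g
    · exact hg
    · exact ⟨_, .const ((hlabel i hig).trans h), hσt⟩
  | @or_left i a b t h ha _ ih =>
    obtain rfl | hig := eq_or_ne i g
    · exact hg
    · obtain ⟨t', ht', hσt'⟩ := ih hσt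
      exact ⟨t', .or_left ((hlabel i hig).trans h) (hn ▸ ha) ht', hσt'⟩
  | @or_right i a b t h hb _ ih =>
    obtain rfl | hig := eq_or_ne i g
    · exact hg
    · obtain ⟨t', ht', hσt'⟩ := ih hσt
      exact ⟨t', .or_right ((hlabel i hig).trans h) (hn ▸ hb) ht', hσt'⟩
  | @and i a b t₁ t₂ h ha hb _ _ ih₁ ih₂ =>
    obtain rfl | hig := eq_or_ne i g
    · exact hg
    · rw [termEval_append, Bool.and_eq_true] at hσt
      obtain ⟨t₁', ht₁', hσt₁'⟩ := ih₁ hσt.1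
      obtain ⟨t₂', ht₂', hσt₂'⟩ := ih₂ hσt.2
      refine ⟨t₁' ++ t₂',
        .and ((hlabel i hig).trans h) (hn ▸ ha) (hn ▸ hb) ht₁' ht₂', ?_⟩
      rw [termEval_append, hσt₁', hσt₂', Bool.and_self]

theorem replaceByTrue_label_of_ne (C : Circuit V) {g i : Fin C.n} (h : i ≠ g) :
    (C.replaceByTrue g).label i = C.label i :=
  Function.update_of_ne h _ _

theorem gateFun_replaceByTrue_self (C : Circuit V) (g : Fin C.n) (σ : V → Bool) :
    (C.replaceByTrue g).gateFun g σ :=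
  ⟨_, .const (Function.update_self _ _ _), rfl⟩

theorem gateFun_replaceByTrue_of_gateFun {C : Circuit V} {g i : Fin C.n} {σ : V → Bool}
    (h : C.gateFun i σ) : (C.replaceByTrue g).gateFun i σ :=
  gateFun_of_label_eq_of_ne (C := C) (D := C.replaceByTrue g) rfl
    (fun _ => C.replaceByTrue_label_of_ne) (C.gateFun_replaceByTrue_self g σ) h

theorem gateFun_of_gateFun_replaceByTrue {C : Circuit V} {g i : Fin C.n} {σ : V → Bool}
    (hg : C.gateFun g σ) (h : (C.replaceByTrue g).gateFun i σ) : C.gateFun i σ :=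
  gateFun_of_label_eq_of_ne (C := C.replaceByTrue g) (D := C) rfl
    (fun _ hi => (C.replaceByTrue_label_of_ne hi).symm) hg h

end Circuit

section Isol

variable {k n : ℕ}

def fillOffLine (σ : Cell k n → Bool) (d : Fin k) (c : Cell k n) : Cell k n → Bool :=
  fun x => if ∀ j, j ≠ d → x j = c j then σ x else true

theorem le_fillOffLine (σ : Cell k n → Bool) (d : Fin k) (c : Cell k n) :
    σ ≤ fillOffLine σ d c := by
  intro x
  unfold fillOffLine
  split_ifs
  exacts [le_rfl, Bool.le_true _]

theorem fillOffLine_apply_eq_true {σ : Cell k n → Bool} {d : Fin k} {c x : Cell k n}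
    (hx : ¬ ∀ j, j ≠ d → x j = c j) : fillOffLine σ d c x = true :=
  if_neg hx

theorem not_isolFun_fillOffLine {σ : Cell k n → Bool} {d : Fin k} {c : Cell k n}
    (hσ : ∀ x : Cell k n, (∀ j, j ≠ d → x j = c j) → σ x = false) :
    ¬ IsolFun k n (fillOffLine σ d c) := fun h => by
  obtain ⟨x, hx, hτx⟩ := h d c
  rw [fillOffLine, if_pos hx, hσ x hx] at hτx
  exact Bool.false_ne_true hτx

end Isol

/-- Let `C` be a monotone Boolean circuit computing `Isol_{k,n}` (at its
output gate `o`), and let `g` be a gate of `C` computing a disjunction of the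
variables in `W`. If the entries represented by the variables in `W` do not
all belong to a common line of the input matrix, then the circuit obtained
from `C` by replacing the gate `g` with the Boolean constant `1` still
computes `Isol_{k,n}`. -/
theorem replace_gate_by_true (k n : ℕ) (C : Circuit (Cell k n)) (o : Fin C.n)
    (hcomp : ∀ σ : Cell k n → Bool, C.gateFun o σ ↔ IsolFun k n σ)
    (g : Fin C.n) (W : Finset (Cell k n))
    (hg : ∀ σ : Cell k n → Bool, C.gateFun g σ ↔ ∃ v ∈ W, σ v = true)
    (hW : ¬ ∃ (d : Fin k) (c : Cell k n), ∀ x ∈ W, ∀ j : Fin k, j ≠ d → x j = c j) :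
    ∀ σ : Cell k n → Bool,
      (C.replaceByTrue g).gateFun ⟨o.1, o.2⟩ σ ↔ IsolFun k n σ := by
  intro σ
  refine ⟨fun hσ => ?_, fun hσ => Circuit.gateFun_replaceByTrue_of_gateFun ((hcomp σ).2 hσ)⟩
  by_contra hIsol
  obtain ⟨d, c, hzero⟩ : ∃ (d : Fin k) (c : Cell k n),
      ∀ x : Cell k n, (∀ j, j ≠ d → x j = c j) → σ x = false := by
    simpa [IsolFun] using hIsol
  obtain ⟨w, hwW, hw⟩ : ∃ w ∈ W, ¬ ∀ j, j ≠ d → w j = c j := by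
    by_contra! h
    exact hW ⟨d, c, h⟩
  have hgτ : C.gateFun g (fillOffLine σ d c) :=
    (hg _).2 ⟨w, hwW, fillOffLine_apply_eq_true hw⟩
  have hτ : (C.replaceByTrue g).gateFun o (fillOffLine σ d c) :=
    Circuit.gateFun_mono _ _ (le_fillOffLine σ d c) hσ
  exact not_isolFun_fillOffLine hzero
    ((hcomp _).1 (Circuit.gateFun_of_gateFun_replaceByTrue hgτ hτ))

end MC
end
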